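/- An effect algebra with n elements has at most (n-1)(n-2)/2 defined sums among pairs (e, f) with e, f both different from 0 and 1 (counting ordered pairs up to symmetry, i.e., at least (n-2)(n-3)/2 of the (n-2)² nontrivial ordered pairs are undefined). -/

import Mathlib

/-- An effect algebra: a set with `zero`, `one`, a partial commutative associative
sum (modelled as an `Option`-valued operation), unique complements, and
`e ⊕ 1` defined only for `e = 0`. -/
structure EffectAlgebra (E : Type*) where
  zero : E
  one : E
  add : E → E → Option E
  comm : ∀ e f, add e f = add f e
  assoc : ∀ e f g, (add e f).bind (fun s => add s g) = (add f g).bind (fun s => add e s)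
  compl : E → E
  add_compl : ∀ e, add e (compl e) = some one
  compl_unique : ∀ e f, add e f = some one → f = compl e
  one_max : ∀ e f, add e one = some f → e = zero

namespace EffectAlgebra

variable {E : Type*}

/-- Intrinsic order: `e ≤ f` iff `f = e ⊕ g` for some `g`. -/
def le (A : EffectAlgebra E) (e f : E) : Prop := ∃ g, A.add e g = some f

/-- Iterated sum `e ⊕ e ⊕ ⋯ ⊕ e` (`n` copies), when defined. -/
def nsum (A : EffectAlgebra E) (e : E) : ℕ → Option E
  | 0 => some A.zero
  | n + 1 => (nsum A e n).bind (fun s => A.add e s)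

end EffectAlgebra

/-- The underlying set `{k/(n-1) : 0 ≤ k ≤ n-1}` of the scale effect algebra `S_n`. -/
def scaleSet (n : ℕ) : Set ℝ := {x | ∃ k : ℕ, k ≤ n - 1 ∧ x = (k : ℝ) / ((n : ℝ) - 1)}

/-! Sending a defined sum `e ⊕ f = s` of nonzero elements to the two-element set `{f, s}` of
nonzero elements is injective: if `{f, s} = {f', s'}` with `f = f'`, cancellation gives `e = e'`;
the crossed case `f = s'`, `s = f'` would make `f < s ≤ f`, which positivity of the sum forbids.
So there are at most `(n - 1).choose 2 = (n - 1)(n - 2) / 2` such sums. -/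

namespace EffectAlgebra

variable {E : Type*} (A : EffectAlgebra E)

section Basic

variable {a b c s t : E}

lemma exists_add_add_left (hbc : A.add b c = some s) (has : A.add a s = some t) :
    ∃ u, A.add a b = some u ∧ A.add u c = some t := by
  have h := A.assoc a b c
  rw [hbc, Option.bind_some, has] at h
  exact Option.bind_eq_some_iff.mp h

lemma exists_add_add_right (hab : A.add a b = some s) (hsc : A.add s c = some t) :
    ∃ u, A.add b c = some u ∧ A.add a u = some t := by
  have h := A.assoc a b c
  rw [hab, Option.bind_some, hsc] at h
  exact Option.bind_eq_some_iff.mp h.symm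

lemma compl_add (e : E) : A.add (A.compl e) e = some A.one := by
  rw [A.comm]; exact A.add_compl e

lemma compl_compl (e : E) : A.compl (A.compl e) = e :=
  (A.compl_unique _ _ (A.compl_add e)).symm

lemma compl_injective : Function.Injective A.compl :=
  Function.LeftInverse.injective A.compl_compl

lemma zero_add (e : E) : A.add A.zero e = some e := by
  have hcompl_one : A.compl A.one = A.zero := A.one_max _ A.one (A.compl_add A.one)
  have h01 : A.add A.zero A.one = some A.one := by
    rw [A.comm, ← hcompl_one]; exact A.add_compl A.one
  obtain ⟨u, hu, hue⟩ := A.exists_add_add_left (A.add_compl e) h01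
  rw [hu, A.compl_injective (A.compl_unique u _ hue)]

lemma compl_add_eq_compl_of_add_eq (h : A.add a b = some s) :
    A.add (A.compl s) a = some (A.compl b) := by
  obtain ⟨u, hu, hau⟩ := A.exists_add_add_right h (A.add_compl s)
  rw [A.compl_unique a u hau] at hu
  obtain ⟨v, hv, hbv⟩ := A.exists_add_add_right hu (A.compl_add a)
  rw [hv, ← A.compl_unique b v hbv]

lemma add_right_cancel (h₁ : A.add a c = some s) (h₂ : A.add b c = some s) : a = b := by
  rw [A.comm] at h₁ h₂
  have h := (A.compl_add_eq_compl_of_add_eq h₁).symm.trans (A.compl_add_eq_compl_of_add_eq h₂)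
  exact A.compl_injective (Option.some_injective _ h)

lemma eq_zero_of_add_eq_self (h : A.add a b = some b) : a = A.zero :=
  A.add_right_cancel h (A.zero_add b)

lemma eq_zero_of_add_eq_zero (h : A.add a b = some A.zero) : b = A.zero := by
  obtain ⟨u, hu, -⟩ := A.exists_add_add_right h (A.zero_add A.one)
  exact A.one_max b u hu

lemma eq_zero_of_add_add_eq (h₁ : A.add a b = some s) (h₂ : A.add c s = some b) : a = A.zero := by
  obtain ⟨t, ht, htb⟩ := A.exists_add_add_left h₁ h₂
  rw [A.eq_zero_of_add_eq_self htb] at ht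
  exact A.eq_zero_of_add_eq_zero ht

end Basic

section Counting

variable [DecidableEq E]

lemma eq_of_pair_sum_eq {e f s e' f' s' : E} (he' : e' ≠ A.zero) (h : A.add e f = some s)
    (h' : A.add e' f' = some s') (hpair : ({f, s} : Finset E) = {f', s'}) : e = e' ∧ f = f' := by
  have hpair' : ({f, s} : Set E) = {f', s'} := by
    rw [← Finset.coe_pair, hpair, Finset.coe_pair]
  rcases Set.pair_eq_pair_iff.mp hpair' with ⟨rfl, rfl⟩ | ⟨rfl, rfl⟩
  · exact ⟨A.add_right_cancel h h', rfl⟩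
  · exact absurd (A.eq_zero_of_add_add_eq h' h) he'

variable [Fintype E]

def nonzeroSums : Finset (E × E) :=
  Finset.univ.filter fun p => p.1 ≠ A.zero ∧ p.2 ≠ A.zero ∧ (A.add p.1 p.2).isSome

lemma pair_sum_mem_powersetCard {e f s : E} (he : e ≠ A.zero) (hf : f ≠ A.zero)
    (h : A.add e f = some s) : ({f, s} : Finset E) ∈ (Finset.univ.erase A.zero).powersetCard 2 := by
  have hs : s ≠ A.zero := fun hs => hf (A.eq_zero_of_add_eq_zero (hs ▸ h))
  have hfs : f ≠ s := fun hfs => he (A.eq_zero_of_add_eq_self (hfs ▸ h))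
  rw [Finset.mem_powersetCard, Finset.card_pair hfs]
  exact ⟨Finset.insert_subset (by simpa) (by simpa), rfl⟩

lemma card_nonzeroSums_le : A.nonzeroSums.card ≤ (Fintype.card E - 1).choose 2 := by
  have hmem : ∀ p ∈ A.nonzeroSums,
      p.1 ≠ A.zero ∧ p.2 ≠ A.zero ∧ ∃ s, A.add p.1 p.2 = some s := by
    intro p hp
    obtain ⟨-, he, hf, hsum⟩ := Finset.mem_filter.mp hp
    exact ⟨he, hf, Option.isSome_iff_exists.mp hsum⟩
  -- The default value of `getD` is never used on `nonzeroSums`.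
  calc A.nonzeroSums.card ≤ ((Finset.univ.erase A.zero).powersetCard 2).card := by
        refine Finset.card_le_card_of_injOn (fun p => {p.2, (A.add p.1 p.2).getD A.zero})
          (fun p hp => ?_) (fun p hp q hq hpq => ?_)
        · obtain ⟨he, hf, s, h⟩ := hmem p hp
          simpa only [h, Option.getD_some, Finset.mem_coe] using A.pair_sum_mem_powersetCard he hf h
        · obtain ⟨-, -, s, hp⟩ := hmem p hp
          obtain ⟨he', -, s', hq⟩ := hmem q hq
          simp only [hp, hq, Option.getD_some] at hpq
          exact Prod.ext_iff.mpr (A.eq_of_pair_sum_eq he' hp hq hpq)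
    _ = (Fintype.card E - 1).choose 2 := by
        rw [Finset.card_powersetCard, Finset.card_erase_of_mem (Finset.mem_univ _),
          Finset.card_univ]

end Counting

end EffectAlgebra

theorem defined_sums_le {E : Type*} [Fintype E] [DecidableEq E] (A : EffectAlgebra E) :
    (Finset.univ.filter (fun p : E × E =>
        p.1 ≠ A.zero ∧ p.1 ≠ A.one ∧ p.2 ≠ A.zero ∧ p.2 ≠ A.one ∧
        (A.add p.1 p.2).isSome)).card
      ≤ (Fintype.card E - 1) * (Fintype.card E - 2) / 2 := by
  have hsub : Finset.univ.filter (fun p : E × E =>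
        p.1 ≠ A.zero ∧ p.1 ≠ A.one ∧ p.2 ≠ A.zero ∧ p.2 ≠ A.one ∧ (A.add p.1 p.2).isSome)
      ⊆ A.nonzeroSums :=
    Finset.monotone_filter_right _ fun _ _ h => ⟨h.1, h.2.2.1, h.2.2.2.2⟩
  calc _ ≤ A.nonzeroSums.card := Finset.card_le_card hsub
    _ ≤ (Fintype.card E - 1).choose 2 := A.card_nonzeroSums_le
    _ = (Fintype.card E - 1) * (Fintype.card E - 2) / 2 := by
        rw [Nat.choose_two_right, Nat.sub_sub]
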